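/- arXiv:2012.12328 — 2 statements merged into one kernel-verified Lean document; each statement's English description precedes it below -/
import Mathlib

section
/- Let R be a principal ideal domain and n ≥ 3. If Sp₄(R) and Sp_{2n}(R) are generated by their root elements and every element of Sp₄(R) (embedded in Sp_{2n}(R)) is a product of at most K conjugates of root elements, then every element of Sp_{2n}(R) is a product of at most 12(n−2) + K conjugates of root elements, i.e. ‖Sp_{2n}(R)‖_{EL_Q} ≤ 12(n−2) + K. -/
open Matrix

/-- The standard symplectic form matrix `J = [[0, Iₙ], [-Iₙ, 0]]`. -/
def Jmat (n : ℕ) (R : Type*) [CommRing R] :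
    Matrix (Fin n ⊕ Fin n) (Fin n ⊕ Fin n) R :=
  fromBlocks 0 1 (-1) 0

/-- `A ∈ Sp_{2n}(R)`, i.e. `AᵀJA = J`. -/
def IsSymp {n : ℕ} {R : Type*} [CommRing R]
    (A : Matrix (Fin n ⊕ Fin n) (Fin n ⊕ Fin n) R) : Prop :=
  Aᵀ * Jmat n R * A = Jmat n R

/-- The root elements of `Sp_{2n}(R)` for the positive roots of `C_n`. -/
def PosRootElems (n : ℕ) (R : Type*) [CommRing R] :
    Set (Matrix (Fin n ⊕ Fin n) (Fin n ⊕ Fin n) R) :=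
  {M | ∃ t : R,
    (∃ i j : Fin n, i < j ∧ M = 1 + t • (single (Sum.inl i) (Sum.inl j) 1 -
        single (Sum.inr j) (Sum.inr i) 1)) ∨
    (∃ i j : Fin n, i < j ∧ M = 1 + t • (single (Sum.inl i) (Sum.inr j) 1 +
        single (Sum.inl j) (Sum.inr i) 1)) ∨
    (∃ i : Fin n, M = 1 + t • single (Sum.inl i) (Sum.inr i) 1)}

/-- The root elements of `Sp_{2n}(R)` for the negative roots of `C_n`. -/
def NegRootElems (n : ℕ) (R : Type*) [CommRing R] :
    Set (Matrix (Fin n ⊕ Fin n) (Fin n ⊕ Fin n) R) :=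
  {M | ∃ t : R,
    (∃ i j : Fin n, j < i ∧ M = 1 + t • (single (Sum.inl i) (Sum.inl j) 1 -
        single (Sum.inr j) (Sum.inr i) 1)) ∨
    (∃ i j : Fin n, i < j ∧ M = 1 + t • (single (Sum.inr j) (Sum.inl i) 1 +
        single (Sum.inr i) (Sum.inl j) 1)) ∨
    (∃ i : Fin n, M = 1 + t • single (Sum.inr i) (Sum.inl i) 1)}

/-- All root elements of `Sp_{2n}(R)`. -/
def RootElems (n : ℕ) (R : Type*) [CommRing R] :
    Set (Matrix (Fin n ⊕ Fin n) (Fin n ⊕ Fin n) R) :=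
  PosRootElems n R ∪ NegRootElems n R

/-- `EL_Q`: all conjugates of root elements by symplectic matrices. -/
def ELQ (n : ℕ) (R : Type*) [CommRing R] :
    Set (Matrix (Fin n ⊕ Fin n) (Fin n ⊕ Fin n) R) :=
  {M | ∃ E ∈ RootElems n R, ∃ g, IsSymp g ∧ M = g * E * g⁻¹}

/-- The copy of `Sp₄(R)` in `Sp_{2n}(R)` supported on the coordinates
`n−1, n, 2n−1, 2n`. -/
def EmbSp4 (n : ℕ) (hn : 2 ≤ n) (R : Type*) [CommRing R] :
    Set (Matrix (Fin n ⊕ Fin n) (Fin n ⊕ Fin n) R) :=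
  {M | IsSymp M ∧ ∀ p q : Fin n ⊕ Fin n,
    (p ∉ ({Sum.inl ⟨n - 2, by omega⟩, Sum.inl ⟨n - 1, by omega⟩,
           Sum.inr ⟨n - 2, by omega⟩, Sum.inr ⟨n - 1, by omega⟩} :
        Set (Fin n ⊕ Fin n)) ∨
     q ∉ ({Sum.inl ⟨n - 2, by omega⟩, Sum.inl ⟨n - 1, by omega⟩,
           Sum.inr ⟨n - 2, by omega⟩, Sum.inr ⟨n - 1, by omega⟩} :
        Set (Fin n ⊕ Fin n))) →
    M p q = (1 : Matrix (Fin n ⊕ Fin n) (Fin n ⊕ Fin n) R) p q}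

/-!
Vectors are indexed by `Fin n ⊕ Fin n`: `inl i` and `inr i` are the symplectic basis vectors
`e_i` and `f_i`, and both have `level` `i`.

The symplectic transvections `τ u t = 1 + t • u (J u)ᵀ`, acting by `x ↦ x + t ω(x, u) u`, all lie
in `EL_Q`: over a PID every `u` is `d • u₀` with `u₀` unimodular, `Sp_{2n}(R)` is transitive on
unimodular vectors, so `τ u t` is conjugate to the long-root element `τ e₀ (t d²)`.

A symplectic `M` fixing `e_j, f_j` for `j < k` has columns `M e_k`, `M f_k` vanishing at levels
below `k`. At most four transvections along vectors vanishing at levels below `k` carry the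
unimodular column `M e_k` to `e_k`, and two more, along vectors that are also `ω`-orthogonal to
`e_k`, carry the next column to `f_k`; none of them moves `e_j, f_j` for `j < k`. The first four
need the stable range of a PID: if `(a, b, h)` is unimodular and `h ≠ 0`, then `a + t b` is
coprime to `h` for some `t`. After `6 (n - 2)` transvections the matrix fixes `e_j, f_j` for
`j < n - 2`, so it lies in the embedded `Sp₄(R)` and is a product of at most `K` elements of
`EL_Q`.
-/

section WordLength

variable {M : Type*} [Monoid M]

def WordLengthLE (S : Set M) (m : ℕ) (x : M) : Prop :=
  ∃ L : List M, (∀ y ∈ L, y ∈ S) ∧ L.length ≤ m ∧ x = L.prod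

namespace WordLengthLE

variable {S T : Set M} {m m' : ℕ} {x y : M}

theorem one (S : Set M) (m : ℕ) : WordLengthLE S m 1 :=
  ⟨[], by simp, by simp, rfl⟩

theorem of_mem (hx : x ∈ S) : WordLengthLE S 1 x :=
  ⟨[x], by simpa using hx, by simp, by simp⟩

theorem mul (hx : WordLengthLE S m x) (hy : WordLengthLE S m' y) :
    WordLengthLE S (m + m') (x * y) := by
  obtain ⟨L, hLS, hLm, rfl⟩ := hx
  obtain ⟨L', hL'S, hL'm, rfl⟩ := hy
  refine ⟨L ++ L', ?_, ?_, List.prod_append.symm⟩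
  · exact fun y hy => (List.mem_append.mp hy).elim (hLS y) (hL'S y)
  · simpa using add_le_add hLm hL'm

theorem mono (hx : WordLengthLE S m x) (hST : S ⊆ T) (hm : m ≤ m') : WordLengthLE T m' x :=
  let ⟨L, hLS, hLm, hx⟩ := hx
  ⟨L, fun y hy => hST (hLS y hy), hLm.trans hm, hx⟩

theorem induction_on {P : M → Prop} (hx : WordLengthLE S m x) (one : P 1)
    (mul : ∀ s ∈ S, ∀ y, P y → P (s * y)) : P x := by
  obtain ⟨L, hLS, -, rfl⟩ := hx
  induction L with
  | nil => exact one
  | cons s L ih =>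
    rw [List.prod_cons]
    exact mul s (hLS s (by simp)) _ (ih fun y hy => hLS y (by simp [hy]))

end WordLengthLE

end WordLength

section

open Sum

variable {n : ℕ} {R : Type*} [CommRing R]

variable {A B : Matrix (Fin n ⊕ Fin n) (Fin n ⊕ Fin n) R}

theorem Jmat_eq_neg_J : Jmat n R = -J (Fin n) R := by
  simp [Jmat, J, fromBlocks_neg]

theorem isSymp_iff_mem_symplecticGroup : IsSymp A ↔ A ∈ symplecticGroup (Fin n) R := by
  rw [SymplecticGroup.mem_iff', IsSymp, Jmat_eq_neg_J, Matrix.mul_neg, Matrix.neg_mul, neg_inj]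

theorem isSymp_one : IsSymp (1 : Matrix (Fin n ⊕ Fin n) (Fin n ⊕ Fin n) R) :=
  isSymp_iff_mem_symplecticGroup.mpr (one_mem _)

theorem IsSymp.mul (hA : IsSymp A) (hB : IsSymp B) : IsSymp (A * B) :=
  isSymp_iff_mem_symplecticGroup.mpr <|
    mul_mem (isSymp_iff_mem_symplecticGroup.mp hA) (isSymp_iff_mem_symplecticGroup.mp hB)

theorem IsSymp.isUnit_det (hA : IsSymp A) : IsUnit A.det :=
  SymplecticGroup.symplectic_det (isSymp_iff_mem_symplecticGroup.mp hA)

theorem IsSymp.mul_inv (hA : IsSymp A) : A * A⁻¹ = 1 := mul_nonsing_inv A hA.isUnit_det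

theorem IsSymp.inv_mul (hA : IsSymp A) : A⁻¹ * A = 1 := nonsing_inv_mul A hA.isUnit_det

theorem IsSymp.inv (hA : IsSymp A) : IsSymp A⁻¹ := by
  have hA' := isSymp_iff_mem_symplecticGroup.mp hA
  rw [isSymp_iff_mem_symplecticGroup, ← SymplecticGroup.coe_inv' ⟨A, hA'⟩]
  exact Subtype.prop _

variable (n R) in
def sympForm : (Fin n ⊕ Fin n → R) →ₗ[R] (Fin n ⊕ Fin n → R) →ₗ[R] R :=
  toLinearMap₂' R (Jmat n R)

local notation "ω" => sympForm n R

theorem sympForm_apply (x y : Fin n ⊕ Fin n → R) : ω x y = x ⬝ᵥ Jmat n R *ᵥ y :=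
  toLinearMap₂'_apply' _ _ _

@[simp]
theorem Jmat_mulVec_inl (y : Fin n ⊕ Fin n → R) (i : Fin n) :
    (Jmat n R *ᵥ y) (inl i) = y (inr i) := by
  simp [Jmat, fromBlocks_mulVec]

@[simp]
theorem Jmat_mulVec_inr (y : Fin n ⊕ Fin n → R) (i : Fin n) :
    (Jmat n R *ᵥ y) (inr i) = -y (inl i) := by
  simp [Jmat, fromBlocks_mulVec, neg_mulVec]

theorem Jmat_mulVec_Jmat_mulVec (y : Fin n ⊕ Fin n → R) :
    Jmat n R *ᵥ Jmat n R *ᵥ y = -y := by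
  ext (i | i) <;> simp

theorem sympForm_single_left (p : Fin n ⊕ Fin n) (y : Fin n ⊕ Fin n → R) :
    ω (Pi.single p 1) y = (Jmat n R *ᵥ y) p := by
  rw [sympForm_apply, single_one_dotProduct]

theorem sympForm_isAlt : (ω).IsAlt := fun x => by
  simp [sympForm_apply, dotProduct, Fintype.sum_sum_type, mul_comm]

theorem sympForm_swap (x y : Fin n ⊕ Fin n → R) : ω y x = -ω x y :=
  (sympForm_isAlt.neg x y).symm

theorem sympForm_single_right (x : Fin n ⊕ Fin n → R) (p : Fin n ⊕ Fin n) :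
    ω x (Pi.single p 1) = -(Jmat n R *ᵥ x) p := by
  rw [sympForm_swap, sympForm_single_left]

theorem sympForm_Jmat_mulVec_left (ζ x : Fin n ⊕ Fin n → R) :
    ω (Jmat n R *ᵥ ζ) x = ζ ⬝ᵥ x := by
  rw [sympForm_swap, sympForm_apply, Jmat_mulVec_Jmat_mulVec, dotProduct_neg, neg_neg,
    dotProduct_comm]

theorem isSymp_iff_sympForm :
    IsSymp A ↔ ∀ x y, ω (A *ᵥ x) (A *ᵥ y) = ω x y := by
  rw [IsSymp, ← (toLinearMap₂' R : Matrix (Fin n ⊕ Fin n) (Fin n ⊕ Fin n) R ≃ₗ[R]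
    (Fin n ⊕ Fin n → R) →ₗ[R] (Fin n ⊕ Fin n → R) →ₗ[R] R).injective.eq_iff,
    ← toLinearMap₂'_comp]
  exact LinearMap.ext_iff₂

theorem IsSymp.sympForm_mulVec (hA : IsSymp A) (x y : Fin n ⊕ Fin n → R) :
    ω (A *ᵥ x) (A *ᵥ y) = ω x y :=
  isSymp_iff_sympForm.mp hA x y

def symplecticTransvection (u : Fin n ⊕ Fin n → R) (t : R) :
    Matrix (Fin n ⊕ Fin n) (Fin n ⊕ Fin n) R :=
  1 + t • vecMulVec u (Jmat n R *ᵥ u)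

local notation "τ" => symplecticTransvection

section Transvection

variable {u x y : Fin n ⊕ Fin n → R} {s t : R}

theorem symplecticTransvection_mulVec (u : Fin n ⊕ Fin n → R) (t : R)
    (x : Fin n ⊕ Fin n → R) : τ u t *ᵥ x = x + (t * ω x u) • u := by
  rw [symplecticTransvection, add_mulVec, one_mulVec, smul_mulVec, vecMulVec_mulVec,
    op_smul_eq_smul, smul_smul, sympForm_apply, dotProduct_comm]

theorem symplecticTransvection_mulVec_of_sympForm_eq_zero (h : ω x u = 0) :
    τ u t *ᵥ x = x := by
  rw [symplecticTransvection_mulVec, h, mul_zero, zero_smul, add_zero]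

theorem symplecticTransvection_sub_mulVec (h : t * ω y x = -1) : τ (x - y) t *ᵥ x = y := by
  rw [symplecticTransvection_mulVec, map_sub, sympForm_isAlt.self_eq_zero, zero_sub,
    ← sympForm_swap, h, neg_one_smul, neg_sub, add_sub_cancel]

theorem isSymp_symplecticTransvection (u : Fin n ⊕ Fin n → R) (t : R) :
    IsSymp (τ u t) := by
  refine isSymp_iff_sympForm.mpr fun x y => ?_
  simp only [symplecticTransvection_mulVec, map_add, map_smul, LinearMap.add_apply,
    LinearMap.smul_apply, smul_eq_mul, sympForm_isAlt.self_eq_zero u, sympForm_swap u y]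
  ring

theorem symplecticTransvection_mul (u : Fin n ⊕ Fin n → R) (s t : R) :
    τ u s * τ u t = τ u (s + t) := by
  refine ext_iff_mulVec.mpr fun x => ?_
  simp only [← mulVec_mulVec, symplecticTransvection_mulVec, map_add, map_smul,
    LinearMap.add_apply, LinearMap.smul_apply, smul_eq_mul, sympForm_isAlt.self_eq_zero u]
  module

theorem symplecticTransvection_zero (u : Fin n ⊕ Fin n → R) : τ u 0 = 1 := by
  simp [symplecticTransvection]

theorem symplecticTransvection_inv (u : Fin n ⊕ Fin n → R) (t : R) :
    (τ u t)⁻¹ = τ u (-t) :=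
  inv_eq_left_inv (by rw [symplecticTransvection_mul, neg_add_cancel, symplecticTransvection_zero])

theorem symplecticTransvection_smul (c : R) (u : Fin n ⊕ Fin n → R) (t : R) :
    τ (c • u) t = τ u (t * c ^ 2) := by
  refine ext_iff_mulVec.mpr fun x => ?_
  simp only [symplecticTransvection_mulVec, map_smul, smul_eq_mul, smul_smul]
  ring_nf

theorem IsSymp.mul_symplecticTransvection_mul_inv
    {g : Matrix (Fin n ⊕ Fin n) (Fin n ⊕ Fin n) R} (hg : IsSymp g) (u : Fin n ⊕ Fin n → R)
    (t : R) : g * τ u t * g⁻¹ = τ (g *ᵥ u) t := by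
  refine ext_iff_mulVec.mpr fun x => ?_
  rw [← mulVec_mulVec, ← mulVec_mulVec, symplecticTransvection_mulVec, mulVec_add, mulVec_smul,
    mulVec_mulVec, hg.mul_inv, one_mulVec, ← hg.sympForm_mulVec, mulVec_mulVec, hg.mul_inv,
    one_mulVec, symplecticTransvection_mulVec]

theorem symplecticTransvection_single_inl (i : Fin n) (t : R) :
    τ (Pi.single (inl i) 1) t = 1 + (-t) • single (inl i) (inr i) 1 := by
  have hJ : Jmat n R *ᵥ Pi.single (inl i) 1 = -Pi.single (inr i) 1 := by
    ext (j | j) <;> simp [Pi.single_apply]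
  rw [symplecticTransvection, hJ, single_eq_single_vecMulVec_single, vecMulVec_neg, smul_neg,
    neg_smul]

end Transvection

section Levels

def level : Fin n ⊕ Fin n → ℕ := Sum.elim (↑) (↑)

@[simp] theorem level_inl (i : Fin n) : level (inl i) = i := rfl

@[simp] theorem level_inr (i : Fin n) : level (inr i) = i := rfl

variable (R) in
def vanishingBelow (k : ℕ) : Submodule R (Fin n ⊕ Fin n → R) where
  carrier := {z | ∀ p, level p < k → z p = 0}
  add_mem' hx hy p hp := by simp [hx p hp, hy p hp]
  zero_mem' _ _ := rfl
  smul_mem' c _ hx p hp := by simp [hx p hp]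

variable {k : ℕ} {p : Fin n ⊕ Fin n} {z : Fin n ⊕ Fin n → R}

theorem single_mem_vanishingBelow (hp : k ≤ level p) :
    (Pi.single p 1 : Fin n ⊕ Fin n → R) ∈ vanishingBelow R k := fun q hq => by
  rw [Pi.single_apply, if_neg (by rintro rfl; omega)]

theorem Jmat_mulVec_mem_vanishingBelow (hz : z ∈ vanishingBelow R k) :
    Jmat n R *ᵥ z ∈ vanishingBelow R k := by
  rintro (i | i) hi
  · simpa using hz (inr i) hi
  · simpa using hz (inl i) hi

theorem symplecticTransvection_mulVec_single (hz : z ∈ vanishingBelow R k) (hp : level p < k)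
    (t : R) : τ z t *ᵥ Pi.single p 1 = Pi.single p 1 :=
  symplecticTransvection_mulVec_of_sympForm_eq_zero <| by
    rw [sympForm_single_left, Jmat_mulVec_mem_vanishingBelow hz p hp]

def FixesBelow (k : ℕ) (M : Matrix (Fin n ⊕ Fin n) (Fin n ⊕ Fin n) R) : Prop :=
  ∀ p, level p < k → M *ᵥ Pi.single p 1 = Pi.single p 1

theorem IsSymp.mulVec_apply_of_fixesBelow {M : Matrix (Fin n ⊕ Fin n) (Fin n ⊕ Fin n) R}
    (hM : IsSymp M) (hfix : FixesBelow k M) (x : Fin n ⊕ Fin n → R) (hp : level p < k) :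
    (M *ᵥ x) p = x p := by
  rcases p with i | i
  · have h := hM.sympForm_mulVec (Pi.single (inr i) 1) x
    rw [hfix (inr i) hp, sympForm_single_left, sympForm_single_left] at h
    simpa using h
  · have h := hM.sympForm_mulVec (Pi.single (inl i) 1) x
    rwa [hfix (inl i) hp, sympForm_single_left, sympForm_single_left, Jmat_mulVec_inl,
      Jmat_mulVec_inl] at h

theorem IsSymp.mulVec_mem_vanishingBelow {M : Matrix (Fin n ⊕ Fin n) (Fin n ⊕ Fin n) R}
    (hM : IsSymp M) (hfix : FixesBelow k M) (hz : z ∈ vanishingBelow R k) :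
    M *ᵥ z ∈ vanishingBelow R k := fun p hp => by
  rw [hM.mulVec_apply_of_fixesBelow hfix z hp, hz p hp]

end Levels

theorem WordLengthLE.matrix_inv {ι : Type*} [Fintype ι] [DecidableEq ι]
    {S : Set (Matrix ι ι R)} (hS : ∀ s ∈ S, s⁻¹ ∈ S) {m : ℕ} {P : Matrix ι ι R}
    (h : WordLengthLE S m P) : WordLengthLE S m P⁻¹ := by
  obtain ⟨L, hLS, hLm, rfl⟩ := h
  induction L generalizing m with
  | nil => simpa using WordLengthLE.one S m
  | cons s L ih =>
    rw [List.prod_cons, Matrix.mul_inv_rev]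
    have hL := ih (m := L.length) (fun y hy => hLS y (by simp [hy])) le_rfl
    exact (hL.mul (.of_mem (hS s (hLS s (by simp))))).mono subset_rfl (by simpa using hLm)

section Products

def transvectionsIn (C : Submodule R (Fin n ⊕ Fin n → R)) :
    Set (Matrix (Fin n ⊕ Fin n) (Fin n ⊕ Fin n) R) :=
  {T | ∃ z ∈ C, ∃ t, τ z t = T}

variable {C C' : Submodule R (Fin n ⊕ Fin n → R)} {m m' : ℕ}
  {P : Matrix (Fin n ⊕ Fin n) (Fin n ⊕ Fin n) R}

theorem transvectionsIn_mono (hC : C ≤ C') : transvectionsIn C ⊆ transvectionsIn C' :=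
  fun _ ⟨z, hz, t, hT⟩ => ⟨z, hC hz, t, hT⟩

namespace WordLengthLE

theorem isSymp (h : WordLengthLE (transvectionsIn C) m P) : IsSymp P :=
  h.induction_on isSymp_one fun _ ⟨z, _, t, hs⟩ _ hy =>
    hs ▸ (isSymp_symplecticTransvection z t).mul hy

theorem mulVec_eq_self (h : WordLengthLE (transvectionsIn C) m P) {x : Fin n ⊕ Fin n → R}
    (hx : ∀ z ∈ C, ∀ t, τ z t *ᵥ x = x) : P *ᵥ x = x :=
  h.induction_on (P := fun P => P *ᵥ x = x) (one_mulVec x) fun _ ⟨z, hz, t, hs⟩ _ hy => by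
    rw [← hs, ← mulVec_mulVec, hy, hx z hz t]

theorem transvectionsIn_inv (h : WordLengthLE (transvectionsIn C) m P) :
    WordLengthLE (transvectionsIn C) m P⁻¹ :=
  h.matrix_inv <| by
    rintro _ ⟨z, hz, t, rfl⟩
    exact ⟨z, hz, -t, (symplecticTransvection_inv z t).symm⟩

end WordLengthLE

def Reaches (C : Submodule R (Fin n ⊕ Fin n → R)) (m : ℕ) (x y : Fin n ⊕ Fin n → R) :
    Prop :=
  ∃ P, WordLengthLE (transvectionsIn C) m P ∧ P *ᵥ x = y

namespace Reaches

variable {x y w z : Fin n ⊕ Fin n → R}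

theorem trans (h₁ : Reaches C m x y) (h₂ : Reaches C m' y w) : Reaches C (m + m') x w := by
  obtain ⟨P, hP, rfl⟩ := h₁
  obtain ⟨Q, hQ, rfl⟩ := h₂
  exact ⟨Q * P, (hQ.mul hP).mono subset_rfl (by omega), by rw [mulVec_mulVec]⟩

theorem mono (h : Reaches C m x y) (hm : m ≤ m') : Reaches C m' x y :=
  let ⟨P, hP, hPx⟩ := h
  ⟨P, hP.mono subset_rfl hm, hPx⟩

theorem step (hz : z ∈ C) (t : R) (x : Fin n ⊕ Fin n → R) : Reaches C 1 x (τ z t *ᵥ x) :=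
  ⟨_, .of_mem ⟨z, hz, t, rfl⟩, rfl⟩

theorem of_sympForm {t : R} (hxy : x - y ∈ C) (h : t * ω y x = -1) : Reaches C 1 x y :=
  symplecticTransvection_sub_mulVec h ▸ step hxy t x

end Reaches

end Products

section Unimodular

theorem span_range_mulVec_le {ι : Type*} [Fintype ι] (A : Matrix ι ι R) (x : ι → R) :
    Ideal.span (Set.range (A *ᵥ x)) ≤ Ideal.span (Set.range x) :=
  Ideal.span_le.mpr <| by
    rintro _ ⟨p, rfl⟩
    exact Ideal.sum_mem _ fun q _ => Ideal.mul_mem_left _ _ (Ideal.subset_span ⟨q, rfl⟩)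

theorem IsSymp.span_range_mulVec_eq_top {M : Matrix (Fin n ⊕ Fin n) (Fin n ⊕ Fin n) R}
    (hM : IsSymp M) {x : Fin n ⊕ Fin n → R} (hx : Ideal.span (Set.range x) = ⊤) :
    Ideal.span (Set.range (M *ᵥ x)) = ⊤ := by
  refine top_le_iff.mp (hx ▸ ?_)
  simpa [mulVec_mulVec, hM.inv_mul] using span_range_mulVec_le M⁻¹ (M *ᵥ x)

end Unimodular

section PID

variable [IsDomain R] [IsPrincipalIdealRing R]

theorem exists_eq_smul_of_span_range_eq_top {ι : Type*} [Fintype ι] [Nonempty ι]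
    (x : ι → R) :
    ∃ (d : R) (x₀ : ι → R), Ideal.span (Set.range x₀) = ⊤ ∧ x = d • x₀ := by
  by_cases hx : x = 0
  · refine ⟨0, fun _ => 1, ?_, by simp [hx]⟩
    exact Ideal.eq_top_of_isUnit_mem _ (Ideal.subset_span ⟨Classical.arbitrary ι, rfl⟩)
      isUnit_one
  obtain ⟨d, hd⟩ := (IsPrincipalIdealRing.principal (Ideal.span (Set.range x))).principal
  rw [Ideal.submodule_span_eq] at hd
  have hdvd (i : ι) : d ∣ x i :=
    Ideal.mem_span_singleton.mp (hd ▸ Ideal.subset_span ⟨i, rfl⟩)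
  choose x₀ hx₀ using hdvd
  have hd0 : d ≠ 0 := fun hd0 => hx (funext fun i => by simp [hx₀ i, hd0])
  obtain ⟨c, hc⟩ :=
    Ideal.mem_span_range_iff_exists_fun.mp (hd ▸ Ideal.mem_span_singleton_self d)
  have hsum : d * ∑ i, c i * x₀ i = d * 1 :=
    calc d * ∑ i, c i * x₀ i = ∑ i, c i * x i := by
          simp_rw [Finset.mul_sum, hx₀, mul_left_comm]
      _ = d * 1 := by rw [hc, mul_one]
  refine ⟨d, x₀, Ideal.eq_top_of_isUnit_mem _ ?_ isUnit_one, funext hx₀⟩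
  rw [← mul_left_cancel₀ hd0 hsum]
  exact Ideal.mem_span_range_iff_exists_fun.mpr ⟨c, rfl⟩

theorem exists_isCoprime_add_mul {a b h : R} (hh : h ≠ 0) (hspan : Ideal.span {a, b, h} = ⊤) :
    ∃ t, IsCoprime (a + t * b) h := by
  classical
  set t := ((UniqueFactorizationMonoid.factors h).filter (¬ · ∣ a)).prod
  have hdvd_t {p : R} (hp : Prime p) (hph : p ∣ h) : p ∣ t ↔ ¬ p ∣ a := by
    constructor
    · intro hpt hpa
      obtain ⟨q, hq, hpq⟩ := hp.exists_mem_multiset_dvd hpt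
      rw [Multiset.mem_filter] at hq
      have hq' := UniqueFactorizationMonoid.prime_of_factor q hq.1
      exact hq.2 ((hp.associated_of_dvd hq' hpq).symm.dvd.trans hpa)
    · intro hpa
      obtain ⟨q, hq, hpq⟩ :=
        UniqueFactorizationMonoid.exists_mem_factors_of_dvd hh hp.irreducible hph
      exact hpq.dvd.trans (Multiset.dvd_prod (Multiset.mem_filter.mpr
        ⟨hq, fun hqa => hpa (hpq.dvd.trans hqa)⟩))
  refine ⟨t, isCoprime_of_prime_dvd (fun h0 => hh h0.2) fun p hp hpab hph => ?_⟩
  by_cases hpa : p ∣ a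
  · have hpb : p ∣ b := by
      have hptb : p ∣ t * b := by simpa using dvd_sub hpab hpa
      exact (hp.dvd_or_dvd hptb).resolve_left fun hpt => (hdvd_t hp hph).mp hpt hpa
    refine hp.not_isUnit (Ideal.span_singleton_eq_top.mp (top_le_iff.mp (hspan ▸ ?_)))
    simp only [Ideal.span_le, Set.insert_subset_iff, Set.singleton_subset_iff, SetLike.mem_coe,
      Ideal.mem_span_singleton]
    exact ⟨hpa, hpb, hph⟩
  · exact hpa (by simpa using dvd_sub hpab (((hdvd_t hp hph).mpr hpa).mul_right b))

end PID

section Moves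

def offPivot (k : Fin n) : Set (Fin n ⊕ Fin n) := {q | k ≤ level q ∧ q ≠ inl k}

variable {k : Fin n} {x w : Fin n ⊕ Fin n → R}

theorem symplecticTransvection_mulVec_mem_vanishingBelow {m : ℕ} {z : Fin n ⊕ Fin n → R}
    (hz : z ∈ vanishingBelow R m) (t : R) (hx : x ∈ vanishingBelow R m) :
    τ z t *ᵥ x ∈ vanishingBelow R m := by
  rw [symplecticTransvection_mulVec]
  exact add_mem hx (Submodule.smul_mem _ _ hz)

theorem reaches_single_inr (hw : w ∈ vanishingBelow R k) (hwk : w (inr k) = 1) :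
    Reaches (vanishingBelow R k ⊓ LinearMap.ker (LinearMap.proj (inr k))) 2 w
      (Pi.single (inr k) 1) := by
  have he : (Pi.single (inl k) 1 : Fin n ⊕ Fin n → R) ∈ vanishingBelow R k :=
    single_mem_vanishingBelow le_rfl
  have hy : τ (Pi.single (inl k) 1) (w (inl k) - 1) *ᵥ w =
      w - (w (inl k) - 1) • Pi.single (inl k) 1 := by
    rw [symplecticTransvection_mulVec, sympForm_single_right, Jmat_mulVec_inl, hwk]
    module
  refine (Reaches.step (Submodule.mem_inf.mpr ⟨he, by simp⟩) (w (inl k) - 1) w).trans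
    (Reaches.of_sympForm (t := 1) (Submodule.mem_inf.mpr ⟨?_, ?_⟩) ?_)
  · exact sub_mem (symplecticTransvection_mulVec_mem_vanishingBelow he _ hw)
      (single_mem_vanishingBelow le_rfl)
  · simp [hy, hwk]
  · simp [sympForm_single_left, hy]

theorem exists_sympForm_eq_one (hS : Ideal.span (x '' offPivot k) = ⊤) :
    ∃ y ∈ vanishingBelow R k, y (inr k) = 1 ∧ ω y x = 1 := by
  -- `y = J (ζ - e_k)` with `ζ ∈ W` and `x ⬝ ζ = 1 + x (inl k)`: the values `x ⬝ ζ`, `ζ ∈ W`,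
  -- form an ideal containing every coordinate of `x` on `offPivot k`.
  set W := vanishingBelow R k ⊓ LinearMap.ker (LinearMap.proj (R := R) (φ := fun _ => R) (inl k))
  have hle : Ideal.span (x '' offPivot k) ≤ W.map (dotProductEquiv R _ x) := by
    refine Ideal.span_le.mpr ?_
    rintro _ ⟨q, ⟨hkq, hq⟩, rfl⟩
    exact ⟨Pi.single q 1, ⟨single_mem_vanishingBelow hkq, by simp [Ne.symm hq]⟩, by simp⟩
  obtain ⟨ζ, ⟨hζ, hζk⟩, hζx⟩ := hle (hS ▸ Submodule.mem_top : 1 + x (inl k) ∈ _)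
  refine ⟨Jmat n R *ᵥ (ζ - Pi.single (inl k) 1), Jmat_mulVec_mem_vanishingBelow
    (sub_mem hζ (single_mem_vanishingBelow le_rfl)), ?_, ?_⟩
  · simp_all
  · simp_all [sympForm_Jmat_mulVec_left, dotProduct_comm]

theorem reaches_single_inl_of_span_image_eq_top (hx : x ∈ vanishingBelow R k)
    (hS : Ideal.span (x '' offPivot k) = ⊤) :
    Reaches (vanishingBelow R k) 2 x (Pi.single (inl k) 1) := by
  obtain ⟨y, hy, hyk, hyx⟩ := exists_sympForm_eq_one hS
  refine (Reaches.of_sympForm (t := -1) (sub_mem hx hy) (by rw [hyx]; ring)).trans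
    (Reaches.of_sympForm (t := -1) (sub_mem hy (single_mem_vanishingBelow le_rfl)) ?_)
  rw [sympForm_single_left, Jmat_mulVec_inl, hyk, mul_one]

theorem span_image_eq_top_of_apply_inl_eq_zero (hx : x ∈ vanishingBelow R k)
    (hu : Ideal.span (Set.range x) = ⊤) (hxk : x (inl k) = 0) :
    Ideal.span (x '' offPivot k) = ⊤ := by
  refine top_le_iff.mp (hu ▸ Ideal.span_le.mpr ?_)
  rintro _ ⟨q, rfl⟩
  by_cases hq : level q < k
  · simp [hx q hq]
  by_cases hqk : q = inl k
  · simp [hqk, hxk]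
  exact Ideal.subset_span ⟨q, ⟨not_lt.mp hq, hqk⟩, rfl⟩

theorem span_image_symplecticTransvection_mulVec_eq_top {t h : R}
    (hh : Ideal.span (x '' {q | k < level q}) = Ideal.span {h})
    (hc : IsCoprime (x (inr k) + t * x (inl k)) h) :
    Ideal.span ((τ (Pi.single (inr k) 1) t *ᵥ x) '' offPivot k) = ⊤ := by
  set y := τ (Pi.single (inr k) 1) t *ᵥ x
  have hy : y = x + (t * x (inl k)) • Pi.single (inr k) 1 := by
    simp [y, symplecticTransvection_mulVec, sympForm_single_right]
  have h₁ : x (inr k) + t * x (inl k) ∈ Ideal.span (y '' offPivot k) :=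
    Ideal.subset_span ⟨inr k, ⟨le_rfl, by simp⟩, by simp [hy]⟩
  have h₂ : h ∈ Ideal.span (y '' offPivot k) := by
    refine Ideal.span_mono ?_ (hh ▸ Ideal.mem_span_singleton_self h)
    rintro _ ⟨q, hq, rfl⟩
    replace hq : (k : ℕ) < level q := hq
    have hqk : q ≠ inr k := by rintro rfl; exact lt_irrefl _ hq
    exact ⟨q, ⟨hq.le, by rintro rfl; exact lt_irrefl _ hq⟩, by simp [hy, hqk]⟩
  obtain ⟨u, v, huv⟩ := hc
  have h₃ := add_mem (Ideal.mul_mem_left _ u h₁) (Ideal.mul_mem_left _ v h₂)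
  rwa [huv, ← Ideal.eq_top_iff_one] at h₃

end Moves

section PIDMoves

variable [IsDomain R] [IsPrincipalIdealRing R] {k : Fin n} {x : Fin n ⊕ Fin n → R}

theorem exists_isCoprime_of_exists_ne_zero (hx : x ∈ vanishingBelow R k)
    (hu : Ideal.span (Set.range x) = ⊤) (htail : ∃ q, k < level q ∧ x q ≠ 0) :
    ∃ t h, Ideal.span (x '' {q | k < level q}) = Ideal.span {h} ∧
      IsCoprime (x (inr k) + t * x (inl k)) h := by
  obtain ⟨h, hh⟩ :=
    (IsPrincipalIdealRing.principal (Ideal.span (x '' {q | k < level q}))).principal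
  rw [Ideal.submodule_span_eq] at hh
  have hh0 : h ≠ 0 := by
    rintro rfl
    obtain ⟨q, hq, hxq⟩ := htail
    have hmem : x q ∈ Ideal.span {(0 : R)} := hh ▸ Ideal.subset_span ⟨q, hq, rfl⟩
    exact hxq (by simpa using hmem)
  have hspan : Ideal.span {x (inr k), x (inl k), h} = ⊤ := by
    refine top_le_iff.mp (hu ▸ Ideal.span_le.mpr ?_)
    rintro _ ⟨q, rfl⟩
    rcases lt_trichotomy (level q) k with hq | hq | hq
    · simp [hx q hq]
    · rcases q with i | i <;> obtain rfl : i = k := Fin.ext hq <;>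
        exact Ideal.subset_span (by simp)
    · have hxq : x q ∈ Ideal.span {h} := hh ▸ Ideal.subset_span ⟨q, hq, rfl⟩
      exact Ideal.span_mono (by simp) hxq
  obtain ⟨t, ht⟩ := exists_isCoprime_add_mul hh0 hspan
  exact ⟨t, h, hh, ht⟩

theorem reaches_single_inl (hk : (k : ℕ) + 1 < n) (hx : x ∈ vanishingBelow R k)
    (hu : Ideal.span (Set.range x) = ⊤) :
    Reaches (vanishingBelow R k) 4 x (Pi.single (inl k) 1) := by
  have hf : (Pi.single (inr k) 1 : Fin n ⊕ Fin n → R) ∈ vanishingBelow R k :=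
    single_mem_vanishingBelow le_rfl
  have of_tail {y} (hy : y ∈ vanishingBelow R k) (hyu : Ideal.span (Set.range y) = ⊤)
      (htail : ∃ q, k < level q ∧ y q ≠ 0) :
      Reaches (vanishingBelow R k) 3 y (Pi.single (inl k) 1) := by
    obtain ⟨t, h, hh, hc⟩ := exists_isCoprime_of_exists_ne_zero hy hyu htail
    exact (Reaches.step hf t y).trans (reaches_single_inl_of_span_image_eq_top
      (symplecticTransvection_mulVec_mem_vanishingBelow hf t hy)
      (span_image_symplecticTransvection_mulVec_eq_top hh hc))
  by_cases htail : ∃ q, k < level q ∧ x q ≠ 0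
  · exact (of_tail hx hu htail).mono (by omega)
  by_cases hxk : x (inl k) = 0
  · exact (reaches_single_inl_of_span_image_eq_top hx
      (span_image_eq_top_of_apply_inl_eq_zero hx hu hxk)).mono (by omega)
  -- all coordinates beyond level `k` vanish: a transvection creates one at `e_{k+1}`
  push Not at htail
  set k' : Fin n := ⟨k + 1, hk⟩
  have hz : Pi.single (inr k) 1 + Pi.single (inl k') 1 ∈ vanishingBelow R k :=
    add_mem hf (single_mem_vanishingBelow (by simp [k']))
  refine (Reaches.step hz 1 x).trans (of_tail
    (symplecticTransvection_mulVec_mem_vanishingBelow hz 1 hx)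
    ((isSymp_symplecticTransvection _ 1).span_range_mulVec_eq_top hu)
    ⟨inl k', by simp [k'], ?_⟩)
  have hxk' : x (inr k') = 0 := htail (inr k') (by simp [k'])
  simpa [symplecticTransvection_mulVec, sympForm_single_right, hxk',
    htail (inl k') (by simp [k'])] using hxk

end PIDMoves

section Reduction

variable {k : ℕ} {C : Submodule R (Fin n ⊕ Fin n → R)} {m : ℕ}
  {M P : Matrix (Fin n ⊕ Fin n) (Fin n ⊕ Fin n) R}

theorem span_range_single_eq_top (p : Fin n ⊕ Fin n) :
    Ideal.span (Set.range (Pi.single p 1 : Fin n ⊕ Fin n → R)) = ⊤ :=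
  Ideal.eq_top_of_isUnit_mem _ (Ideal.subset_span ⟨p, by simp⟩) isUnit_one

theorem FixesBelow.mul (hP : FixesBelow k P) (hM : FixesBelow k M) : FixesBelow k (P * M) :=
  fun p hp => by rw [← mulVec_mulVec, hM p hp, hP p hp]

theorem WordLengthLE.fixesBelow (h : WordLengthLE (transvectionsIn C) m P)
    (hC : C ≤ vanishingBelow R k) : FixesBelow k P :=
  fun _ hp => h.mulVec_eq_self fun _ hz t => symplecticTransvection_mulVec_single (hC hz) hp t

theorem mem_EmbSp4_of_fixesBelow (hn : 2 ≤ n) (hM : IsSymp M) (hfix : FixesBelow (n - 2) M) :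
    M ∈ EmbSp4 n hn R := by
  have hlevel (p : Fin n ⊕ Fin n)
      (hp : p ∉ ({inl ⟨n - 2, by omega⟩, inl ⟨n - 1, by omega⟩, inr ⟨n - 2, by omega⟩,
        inr ⟨n - 1, by omega⟩} : Set (Fin n ⊕ Fin n))) : level p < n - 2 := by
    rcases p with i | i <;>
      simp only [Set.mem_insert_iff, Set.mem_singleton_iff, inl.injEq, inr.injEq, Fin.ext_iff,
        reduceCtorEq, or_self, or_false, false_or, not_or, level_inl, level_inr] at hp ⊢ <;>
      omega
  refine ⟨hM, fun p q hpq => ?_⟩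
  have hMpq : M p q = (M *ᵥ Pi.single q 1) p := by simp
  rcases hpq with hp | hq
  · rw [hMpq, hM.mulVec_apply_of_fixesBelow hfix _ (hlevel p hp)]
    simp [one_apply, Pi.single_apply]
  · rw [hMpq, hfix q (hlevel q hq)]
    simp [one_apply, Pi.single_apply]

theorem exists_fixesBelow_succ_of_mulVec_single_inl {k : Fin n} (hM : IsSymp M)
    (hfix : FixesBelow k M) (he : M *ᵥ Pi.single (inl k) 1 = Pi.single (inl k) 1) :
    ∃ P, WordLengthLE
      (transvectionsIn (vanishingBelow R k ⊓ LinearMap.ker (LinearMap.proj (inr k)))) 2 P ∧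
      FixesBelow (k + 1) (P * M) := by
  have hwk : (M *ᵥ Pi.single (inr k) 1) (inr k) = 1 := by
    have h := hM.sympForm_mulVec (Pi.single (inl k) 1) (Pi.single (inr k) 1)
    rw [he, sympForm_single_left, sympForm_single_left] at h
    simpa using h
  obtain ⟨P, hP, hPw⟩ := reaches_single_inr
    (hM.mulVec_mem_vanishingBelow hfix (single_mem_vanishingBelow (p := inr k) le_rfl)) hwk
  refine ⟨P, hP, fun p hp => ?_⟩
  rcases Nat.lt_succ_iff_lt_or_eq.mp hp with hp | hp
  · exact (hP.fixesBelow inf_le_left).mul hfix p hp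
  rcases p with i | i <;> obtain rfl : i = k := Fin.ext hp <;> rw [← mulVec_mulVec]
  · rw [he]
    refine hP.mulVec_eq_self fun z hz t => symplecticTransvection_mulVec_of_sympForm_eq_zero ?_
    rw [sympForm_single_left, Jmat_mulVec_inl]
    exact (Submodule.mem_inf.mp hz).2
  · exact hPw

variable [IsDomain R] [IsPrincipalIdealRing R]

theorem exists_isSymp_mulVec_single_eq (hn : 1 < n) {u : Fin n ⊕ Fin n → R}
    (hu : Ideal.span (Set.range u) = ⊤) :
    ∃ g, IsSymp g ∧ g *ᵥ Pi.single (inl ⟨0, by omega⟩) 1 = u := by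
  obtain ⟨P, hP, hPu⟩ :=
    reaches_single_inl (k := ⟨0, by omega⟩) hn (fun _ hp => absurd hp (Nat.not_lt_zero _)) hu
  exact ⟨P⁻¹, hP.isSymp.inv, by rw [← hPu, mulVec_mulVec, hP.isSymp.inv_mul, one_mulVec]⟩

theorem symplecticTransvection_mem_ELQ (hn : 1 < n) (u : Fin n ⊕ Fin n → R) (t : R) :
    τ u t ∈ ELQ n R := by
  have : Nonempty (Fin n) := ⟨⟨0, by omega⟩⟩
  obtain ⟨d, u₀, hu₀, rfl⟩ := exists_eq_smul_of_span_range_eq_top u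
  obtain ⟨g, hg, hgu⟩ := exists_isSymp_mulVec_single_eq hn hu₀
  refine ⟨τ (Pi.single (inl ⟨0, by omega⟩) 1) (t * d ^ 2),
    Or.inl ⟨_, Or.inr (Or.inr ⟨_, symplecticTransvection_single_inl _ _⟩)⟩, g, hg, ?_⟩
  rw [hg.mul_symplecticTransvection_mul_inv, hgu, symplecticTransvection_smul]

theorem transvectionsIn_subset_ELQ (hn : 1 < n) (C : Submodule R (Fin n ⊕ Fin n → R)) :
    transvectionsIn C ⊆ ELQ n R := by
  rintro _ ⟨z, -, t, rfl⟩
  exact symplecticTransvection_mem_ELQ hn z t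

theorem exists_fixesBelow_mulVec_single_inl {k : Fin n} (hk : (k : ℕ) + 1 < n) (hM : IsSymp M)
    (hfix : FixesBelow k M) :
    ∃ P, WordLengthLE (transvectionsIn (vanishingBelow R k)) 4 P ∧ FixesBelow k (P * M) ∧
      (P * M) *ᵥ Pi.single (inl k) 1 = Pi.single (inl k) 1 := by
  obtain ⟨P, hP, hPv⟩ := reaches_single_inl hk
    (hM.mulVec_mem_vanishingBelow hfix (single_mem_vanishingBelow (p := inl k) le_rfl))
    (hM.span_range_mulVec_eq_top (span_range_single_eq_top _))
  exact ⟨P, hP, (hP.fixesBelow le_rfl).mul hfix, by rw [← mulVec_mulVec, hPv]⟩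

theorem exists_fixesBelow_succ {k : Fin n} (hk : (k : ℕ) + 1 < n) (hM : IsSymp M)
    (hfix : FixesBelow k M) :
    ∃ P, WordLengthLE (transvectionsIn ⊤) 6 P ∧ FixesBelow (k + 1) (P * M) := by
  obtain ⟨P₁, hP₁, hfix₁, he₁⟩ := exists_fixesBelow_mulVec_single_inl hk hM hfix
  obtain ⟨P₂, hP₂, hfix₂⟩ :=
    exists_fixesBelow_succ_of_mulVec_single_inl (hP₁.isSymp.mul hM) hfix₁ he₁
  refine ⟨P₂ * P₁, ?_, by rwa [Matrix.mul_assoc]⟩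
  exact (hP₂.mono (transvectionsIn_mono le_top) le_rfl).mul
    (hP₁.mono (transvectionsIn_mono le_top) le_rfl)

theorem exists_fixesBelow (m : ℕ) (hm : m + 2 ≤ n) (hM : IsSymp M) :
    ∃ P, WordLengthLE (transvectionsIn ⊤) (6 * m) P ∧ FixesBelow m (P * M) := by
  induction m with
  | zero => exact ⟨1, .one _ _, fun p hp => absurd hp (Nat.not_lt_zero _)⟩
  | succ m ih =>
    obtain ⟨P, hP, hfix⟩ := ih (by omega)
    obtain ⟨Q, hQ, hfix'⟩ :=
      exists_fixesBelow_succ (k := ⟨m, by omega⟩) (show m + 1 < n by omega)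
        (hP.isSymp.mul hM) hfix
    exact ⟨Q * P, (hQ.mul hP).mono subset_rfl (by omega), by rwa [Matrix.mul_assoc]⟩

end Reduction

end

/-- If `Sp₄(R)` and `Sp_{2n}(R)` are generated by root elements over a PID `R` and every
element of the embedded `Sp₄(R)` is a product of at most `K` conjugates of root elements,
then every element of `Sp_{2n}(R)` is a product of at most `12(n−2) + K` conjugates of
root elements. -/
theorem stmt16 {R : Type*} [CommRing R] [IsDomain R] [IsPrincipalIdealRing R]
    {n : ℕ} (hn : 3 ≤ n) (K : ℕ)
    (hK : ∀ M ∈ EmbSp4 n (by omega) R,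
      ∃ L : List (Matrix (Fin n ⊕ Fin n) (Fin n ⊕ Fin n) R),
        (∀ x ∈ L, x ∈ ELQ n R) ∧ L.length ≤ K ∧ M = L.prod) :
    ∀ M : Matrix (Fin n ⊕ Fin n) (Fin n ⊕ Fin n) R, IsSymp M →
      ∃ L : List (Matrix (Fin n ⊕ Fin n) (Fin n ⊕ Fin n) R),
        (∀ x ∈ L, x ∈ ELQ n R) ∧ L.length ≤ 12 * (n - 2) + K ∧ M = L.prod := by
  intro M hM
  obtain ⟨P, hP, hfix⟩ := exists_fixesBelow (n - 2) (by omega) hM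
  have hPM : WordLengthLE (ELQ n R) K (P * M) :=
    hK _ (mem_EmbSp4_of_fixesBelow _ (hP.isSymp.mul hM) hfix)
  have hPinv : WordLengthLE (ELQ n R) (12 * (n - 2)) P⁻¹ :=
    hP.transvectionsIn_inv.mono (transvectionsIn_subset_ELQ (by omega) ⊤) (by omega)
  have hM' := hPinv.mul hPM
  rwa [← Matrix.mul_assoc, hP.isSymp.inv_mul, one_mul] at hM'
end

section
/- Let R be a principal ideal domain of stable range 1 such that Sp_{2n}(R) = E(C_n,R) for some n ≥ 2. Then every element of Sp_{2n}(R) is a product of at most 9n − 6 conjugates of root elements: ‖Sp_{2n}(R)‖_{EL_Q} ≤ 9n − 6. -/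
open Matrix

/-!
A symplectic transvection `T_w(t) : x ↦ x + t ω(w, x) w` satisfies `g T_w(t) g⁻¹ = T_{gw}(t)`
for symplectic `g`. If `ω(w, b)` is a unit for a standard basis vector `b`, some transvection
carries `b` to `w`, so `T_w(t)` is a conjugate of the root element `T_b(t)`.

Let `M` fix the first `κ` hyperbolic pairs `(e_j, f_j)`. Four such transvections, along vectors
orthogonal to those pairs, make it fix `(e_κ, f_κ)` as well. The column `M e_κ` is unimodular, so
stable range one gives a first transvection that turns its `f_κ`-coordinate into a unit; a second
one carries the result to `e_κ`; two more carry `M f_κ` to `f_κ` and fix `e_κ`. Induction on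
`κ` writes every symplectic matrix as a product of `4n ≤ 9n - 6` elements of `EL_Q`.
-/

namespace SymplecticWidth

open Sum

variable {n : ℕ} {R : Type*} [CommRing R]

abbrev Vec (n : ℕ) (R : Type*) := Fin n ⊕ Fin n → R

abbrev Mat (n : ℕ) (R : Type*) := Matrix (Fin n ⊕ Fin n) (Fin n ⊕ Fin n) R

def sympForm : Vec n R →ₗ[R] Vec n R →ₗ[R] R := toLinearMap₂' R (Jmat n R)

lemma sympForm_apply (x y : Vec n R) :
    sympForm x y = ∑ i, (x (inl i) * y (inr i) - x (inr i) * y (inl i)) := by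
  simp [sympForm, toLinearMap₂'_apply', Jmat, dotProduct, mulVec, fromBlocks,
    Fintype.sum_sum_type, one_apply, sub_eq_add_neg, Finset.sum_add_distrib]

lemma sympForm_swap (x y : Vec n R) : sympForm y x = -sympForm x y := by
  rw [sympForm_apply, sympForm_apply, ← Finset.sum_neg_distrib]
  exact Finset.sum_congr rfl fun _ _ => by ring

@[simp] lemma sympForm_self (x : Vec n R) : sympForm x x = 0 := by
  rw [sympForm_apply]
  exact Finset.sum_eq_zero fun _ _ => by ring

@[simp] lemma sympForm_single_inl_left (i : Fin n) (x : Vec n R) :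
    sympForm (Pi.single (inl i) 1) x = x (inr i) := by
  rw [sympForm_apply, Finset.sum_eq_single i] <;> simp +contextual

@[simp] lemma sympForm_single_inr_left (i : Fin n) (x : Vec n R) :
    sympForm (Pi.single (inr i) 1) x = -x (inl i) := by
  rw [sympForm_apply, Finset.sum_eq_single i] <;> simp +contextual

@[simp] lemma sympForm_single_inl_right (i : Fin n) (x : Vec n R) :
    sympForm x (Pi.single (inl i) 1) = -x (inr i) := by
  rw [sympForm_swap, sympForm_single_inl_left]

@[simp] lemma sympForm_single_inr_right (i : Fin n) (x : Vec n R) :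
    sympForm x (Pi.single (inr i) 1) = x (inl i) := by
  rw [sympForm_swap, sympForm_single_inr_left, neg_neg]

lemma sympForm_mem_of_forall_mem {I : Ideal R} {x : Vec n R} (hx : ∀ p, x p ∈ I) (y : Vec n R) :
    sympForm x y ∈ I := by
  rw [sympForm_apply]
  exact I.sum_mem fun i _ => I.sub_mem (I.mul_mem_right _ (hx _)) (I.mul_mem_right _ (hx _))

lemma isSymp_iff_sympForm {M : Mat n R} :
    IsSymp M ↔ ∀ x y, sympForm (M *ᵥ x) (M *ᵥ y) = sympForm x y := by
  have h : ∀ x y,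
      sympForm (M *ᵥ x) (M *ᵥ y) = toLinearMap₂' R (Mᵀ * Jmat n R * M) x y := by
    intro x y
    rw [← toLinearMap₂'_comp]
    rfl
  simp_rw [h, IsSymp, sympForm]
  constructor
  · intro hM x y; rw [hM]
  · intro hM
    exact (toLinearMap₂' R).injective (LinearMap.ext₂ hM)

lemma _root_.IsSymp.sympForm_mulVec_s17 {M : Mat n R} (hM : IsSymp M) (x y : Vec n R) :
    sympForm (M *ᵥ x) (M *ᵥ y) = sympForm x y :=
  isSymp_iff_sympForm.1 hM x y

lemma _root_.IsSymp.mul_s17 {A B : Mat n R} (hA : IsSymp A) (hB : IsSymp B) : IsSymp (A * B) :=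
  isSymp_iff_sympForm.2 fun x y => by
    simp only [← mulVec_mulVec, hA.sympForm_mulVec_s17, hB.sympForm_mulVec_s17]

lemma _root_.IsSymp.mul_inv_s17 {g : Mat n R} (hg : IsSymp g) : g * g⁻¹ = 1 := by
  have hmem : g ∈ symplecticGroup (Fin n) R := by
    have hJ : Jmat n R = -J (Fin n) R := by simp [Jmat, J, fromBlocks_neg]
    simpa [SymplecticGroup.mem_iff', IsSymp, hJ] using hg
  exact mul_nonsing_inv g (SymplecticGroup.symplectic_det hmem)

def sympTransvection (w : Vec n R) (t : R) : Mat n R :=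
  1 + t • vecMulVec w (w ᵥ* Jmat n R)

lemma sympTransvection_mulVec (w : Vec n R) (t : R) (x : Vec n R) :
    sympTransvection w t *ᵥ x = x + (t * sympForm w x) • w := by
  ext p
  simp [sympTransvection, add_mulVec, smul_mulVec, vecMulVec_mulVec, sympForm,
    toLinearMap₂'_apply', dotProduct_mulVec, mul_comm, mul_left_comm]

lemma sympTransvection_mulVec_of_sympForm_eq_zero {w x : Vec n R} (h : sympForm w x = 0) (t : R) :
    sympTransvection w t *ᵥ x = x := by
  simp [sympTransvection_mulVec, h]

lemma sympTransvection_mul (w : Vec n R) (s t : R) :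
    sympTransvection w s * sympTransvection w t = sympTransvection w (s + t) := by
  refine ext_iff_mulVec.2 fun x => ?_
  simp only [← mulVec_mulVec, sympTransvection_mulVec, map_add, map_smul, sympForm_self]
  module

@[simp] lemma sympTransvection_zero (w : Vec n R) : sympTransvection w 0 = 1 := by
  simp [sympTransvection]

lemma isSymp_sympTransvection (w : Vec n R) (t : R) : IsSymp (sympTransvection w t) := by
  refine isSymp_iff_sympForm.2 fun x y => ?_
  simp only [sympTransvection_mulVec, map_add, map_smul, LinearMap.add_apply,
    LinearMap.smul_apply, sympForm_self, smul_eq_mul, sympForm_swap w x]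
  ring

lemma _root_.IsSymp.conj_sympTransvection {g : Mat n R} (hg : IsSymp g) (w : Vec n R) (t : R) :
    g * sympTransvection w t * g⁻¹ = sympTransvection (g *ᵥ w) t := by
  have hcomm : g * sympTransvection w t = sympTransvection (g *ᵥ w) t * g := by
    refine ext_iff_mulVec.2 fun x => ?_
    simp only [← mulVec_mulVec, sympTransvection_mulVec, mulVec_add, mulVec_smul,
      hg.sympForm_mulVec_s17]
  rw [hcomm, Matrix.mul_assoc, hg.mul_inv_s17, Matrix.mul_one]

lemma sympTransvection_sub_mulVec {x y : Vec n R} {c : R} (h : c * sympForm x y = 1) :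
    sympTransvection (x - y) c *ᵥ y = x := by
  rw [sympTransvection_mulVec, map_sub, LinearMap.sub_apply, sympForm_self, sub_zero, h, one_smul]
  abel

lemma sympTransvection_single_inl_mem_rootElems (i : Fin n) (t : R) :
    sympTransvection (Pi.single (inl i) 1) t ∈ RootElems n R := by
  refine Or.inl ⟨t, Or.inr (Or.inr ⟨i, ext_iff_mulVec.2 fun x => ?_⟩)⟩
  ext p
  simp [sympTransvection_mulVec, add_mulVec, single_mulVec_eq]

lemma sympTransvection_single_inr_mem_rootElems (i : Fin n) (t : R) :
    sympTransvection (Pi.single (inr i) 1) t ∈ RootElems n R := by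
  refine Or.inr ⟨-t, Or.inr (Or.inr ⟨i, ext_iff_mulVec.2 fun x => ?_⟩)⟩
  ext p
  simp [sympTransvection_mulVec, add_mulVec, neg_mulVec, single_mulVec_eq]

lemma sympTransvection_mem_ELQ {w b : Vec n R} (hb : ∀ s, sympTransvection b s ∈ RootElems n R)
    (hwb : IsUnit (sympForm w b)) (t : R) : sympTransvection w t ∈ ELQ n R := by
  obtain ⟨u, hu⟩ := hwb
  have hg : sympTransvection (w - b) ↑u⁻¹ *ᵥ b = w :=
    sympTransvection_sub_mulVec (by rw [← hu, Units.inv_mul])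
  refine ⟨_, hb t, _, isSymp_sympTransvection (w - b) ↑u⁻¹, ?_⟩
  rw [(isSymp_sympTransvection _ _).conj_sympTransvection, hg]

def vanishingBelow (k : ℕ) : Submodule R (Vec n R) where
  carrier := {x | ∀ j : Fin n, (j : ℕ) < k → x (inl j) = 0 ∧ x (inr j) = 0}
  zero_mem' _ _ := ⟨rfl, rfl⟩
  add_mem' hx hy j hj := by simp [(hx j hj).1, (hy j hj).1, (hx j hj).2, (hy j hj).2]
  smul_mem' c x hx j hj := by simp [(hx j hj).1, (hx j hj).2]

lemma single_inl_mem_vanishingBelow {k : ℕ} {i : Fin n} (hi : k ≤ i) :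
    Pi.single (inl i) (1 : R) ∈ vanishingBelow k := fun j hj => by
  have : j ≠ i := fun h => by omega
  simp [this]

lemma single_inr_mem_vanishingBelow {k : ℕ} {i : Fin n} (hi : k ≤ i) :
    Pi.single (inr i) (1 : R) ∈ vanishingBelow k := fun j hj => by
  have : j ≠ i := fun h => by omega
  simp [this]

def FixesPairsBelow (k : ℕ) (M : Mat n R) : Prop :=
  ∀ j : Fin n, (j : ℕ) < k →
    M *ᵥ Pi.single (inl j) 1 = Pi.single (inl j) 1 ∧
      M *ᵥ Pi.single (inr j) 1 = Pi.single (inr j) 1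

lemma FixesPairsBelow.mul_s17 {k : ℕ} {A B : Mat n R} (hA : FixesPairsBelow k A)
    (hB : FixesPairsBelow k B) : FixesPairsBelow k (A * B) := fun j hj => by
  simp only [← mulVec_mulVec, (hB j hj).1, (hB j hj).2, (hA j hj).1, (hA j hj).2, and_self]

lemma fixesPairsBelow_sympTransvection {k : ℕ} {w : Vec n R} (hw : w ∈ vanishingBelow k)
    (t : R) : FixesPairsBelow k (sympTransvection w t) := fun j hj =>
  ⟨sympTransvection_mulVec_of_sympForm_eq_zero (by simp [(hw j hj).2]) t,
    sympTransvection_mulVec_of_sympForm_eq_zero (by simp [(hw j hj).1]) t⟩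

lemma FixesPairsBelow.succ {κ : Fin n} {M : Mat n R} (hM : FixesPairsBelow κ M)
    (he : M *ᵥ Pi.single (inl κ) 1 = Pi.single (inl κ) 1)
    (hf : M *ᵥ Pi.single (inr κ) 1 = Pi.single (inr κ) 1) : FixesPairsBelow (κ + 1) M := by
  intro j hj
  rcases (Nat.lt_succ_iff_lt_or_eq.1 hj) with hj | hj
  · exact hM j hj
  · obtain rfl : j = κ := Fin.ext hj
    exact ⟨he, hf⟩

lemma FixesPairsBelow.eq_one {M : Mat n R} (hM : FixesPairsBelow n M) : M = 1 := by
  refine ext_of_mulVec_single fun p => ?_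
  rw [one_mulVec]
  rcases p with j | j
  exacts [(hM j j.isLt).1, (hM j j.isLt).2]

/-- The coordinates at `j` are the pairings with `e_j` and `f_j`, which `M` fixes. -/
lemma _root_.IsSymp.mulVec_apply_of_fixesPairsBelow {k : ℕ} {M : Mat n R} (hM : IsSymp M)
    (hfix : FixesPairsBelow k M) (x : Vec n R) {j : Fin n} (hj : (j : ℕ) < k) :
    (M *ᵥ x) (inl j) = x (inl j) ∧ (M *ᵥ x) (inr j) = x (inr j) := by
  constructor
  · rw [← sympForm_single_inr_right j (M *ᵥ x), ← (hfix j hj).2, hM.sympForm_mulVec_s17,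
      sympForm_single_inr_right]
  · rw [← neg_neg ((M *ᵥ x) (inr j)), ← sympForm_single_inl_right j (M *ᵥ x),
      ← (hfix j hj).1, hM.sympForm_mulVec_s17, sympForm_single_inl_right, neg_neg]

lemma _root_.IsSymp.mulVec_mem_vanishingBelow_s17 {k : ℕ} {M : Mat n R} (hM : IsSymp M)
    (hfix : FixesPairsBelow k M) {x : Vec n R} (hx : x ∈ vanishingBelow k) :
    M *ᵥ x ∈ vanishingBelow k := fun j hj => by
  rw [(hM.mulVec_apply_of_fixesPairsBelow hfix x hj).1,
    (hM.mulVec_apply_of_fixesPairsBelow hfix x hj).2]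
  exact hx j hj

def ELQReduces (m : ℕ) (M N : Mat n R) : Prop :=
  ∃ L : List (Mat n R), (∀ x ∈ L, x ∈ ELQ n R) ∧ L.length ≤ m ∧ M = L.prod * N

lemma ELQReduces.refl (M : Mat n R) : ELQReduces 0 M M :=
  ⟨[], by simp, le_rfl, by simp⟩

lemma ELQReduces.trans {m m' : ℕ} {M N P : Mat n R} (h : ELQReduces m M N)
    (h' : ELQReduces m' N P) : ELQReduces (m + m') M P := by
  obtain ⟨L, hL, hlen, rfl⟩ := h
  obtain ⟨L', hL', hlen', rfl⟩ := h'
  refine ⟨L ++ L', fun x hx => ?_, by simp; omega, by simp [Matrix.mul_assoc]⟩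
  rcases List.mem_append.1 hx with hx | hx
  exacts [hL x hx, hL' x hx]

lemma elqReduces_sympTransvection_mul {k : ℕ} {M : Mat n R} (hM : IsSymp M)
    (hfix : FixesPairsBelow k M) {w b : Vec n R} (hw : w ∈ vanishingBelow k)
    (hb : ∀ s, sympTransvection b s ∈ RootElems n R) (hwb : IsUnit (sympForm w b)) (t : R) :
    ELQReduces 1 M (sympTransvection w t * M) ∧ IsSymp (sympTransvection w t * M) ∧
      FixesPairsBelow k (sympTransvection w t * M) := by
  refine ⟨⟨[sympTransvection w (-t)], ?_, le_rfl, ?_⟩, (isSymp_sympTransvection w t).mul_s17 hM,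
    (fixesPairsBelow_sympTransvection hw t).mul_s17 hfix⟩
  · simpa using sympTransvection_mem_ELQ hb hwb (-t)
  · simp [← Matrix.mul_assoc, sympTransvection_mul]

def HasStableRangeOne (R : Type*) [CommRing R] : Prop :=
  ∀ v₀ v₁ : R, Ideal.span {v₀, v₁} = ⊤ → ∃ t : R, IsUnit (v₁ + t * v₀)

lemma HasStableRangeOne.exists_isUnit_add (hR : HasStableRangeOne R) {x : R} {I : Ideal R}
    (h : Ideal.span {x} ⊔ I = ⊤) : ∃ y ∈ I, IsUnit (x + y) := by
  obtain ⟨_, hrx, i, hi, hsum⟩ := Submodule.mem_sup.1 (h ▸ Submodule.mem_top : (1 : R) ∈ _)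
  obtain ⟨r, rfl⟩ := Ideal.mem_span_singleton'.1 hrx
  have hspan : Ideal.span {i, x} = ⊤ := by
    rw [Ideal.eq_top_iff_one, ← hsum]
    exact Ideal.add_mem _ (Ideal.mul_mem_left _ _ (Ideal.subset_span (by simp)))
      (Ideal.subset_span (by simp))
  obtain ⟨t, ht⟩ := hR i x hspan
  exact ⟨t * i, Ideal.mul_mem_left _ _ hi, ht⟩

/-- Every coordinate of `v` other than `v (inl κ)` is a pairing `ω(v, z)` with `z` in the
submodule `U` below, and `v` is unimodular, so stable range one applies to `v (inl κ) + v (inr κ)`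
modulo the ideal `ω(v, U)`. -/
lemma exists_isUnit_add_sympForm (hR : HasStableRangeOne R) {κ : Fin n} {v y : Vec n R}
    (hv : v ∈ vanishingBelow κ) (hvy : sympForm v y = 1) :
    ∃ z ∈ vanishingBelow κ, z (inr κ) = 0 ∧
      IsUnit (v (inl κ) + v (inr κ) + sympForm v z) := by
  set U : Submodule R (Vec n R) := vanishingBelow κ ⊓ LinearMap.ker (LinearMap.proj (inr κ))
  set I : Ideal R := U.map (sympForm v)
  have hinr : ∀ i : Fin n, κ ≤ i → v (inr i) ∈ I := fun i hi =>
    ⟨-Pi.single (inl i) 1, ⟨neg_mem (single_inl_mem_vanishingBelow hi), by simp⟩, by simp⟩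
  have hinl : ∀ i : Fin n, κ < i → v (inl i) ∈ I := fun i hi =>
    ⟨Pi.single (inr i) 1, ⟨single_inr_mem_vanishingBelow hi.le, by simp [Fin.ne_of_gt hi]⟩,
      by simp⟩
  have hcoord : ∀ p, v p ∈ Ideal.span {v (inl κ) + v (inr κ)} ⊔ I := by
    rintro (i | i)
    · rcases lt_trichotomy i κ with hi | rfl | hi
      · simp [(hv i hi).1]
      · set J := Ideal.span {v (inl i) + v (inr i)} ⊔ I
        have h := J.sub_mem (Ideal.mem_sup_left (Ideal.mem_span_singleton_self _))
          (Ideal.mem_sup_right (hinr i le_rfl))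
        rwa [add_sub_cancel_right] at h
      · exact Ideal.mem_sup_right (hinl i hi)
    · rcases lt_or_ge i κ with hi | hi
      · simp [(hv i hi).2]
      · exact Ideal.mem_sup_right (hinr i hi)
  have htop := (Ideal.eq_top_iff_one _).2 (hvy ▸ sympForm_mem_of_forall_mem hcoord y)
  obtain ⟨_, ⟨z, ⟨hzκ, hz⟩, rfl⟩, hunit⟩ := hR.exists_isUnit_add htop
  exact ⟨z, hzκ, hz, hunit⟩

lemma exists_elqReduces_mulVec_single_inl_eq (hR : HasStableRangeOne R) {κ : Fin n}
    {M : Mat n R} (hM : IsSymp M) (hfix : FixesPairsBelow κ M) :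
    ∃ N, ELQReduces 2 M N ∧ IsSymp N ∧ FixesPairsBelow κ N ∧
      N *ᵥ Pi.single (inl κ) 1 = Pi.single (inl κ) 1 := by
  set e : Vec n R := Pi.single (inl κ) 1
  set f : Vec n R := Pi.single (inr κ) 1
  have he : e ∈ vanishingBelow κ := single_inl_mem_vanishingBelow le_rfl
  have hf : f ∈ vanishingBelow κ := single_inr_mem_vanishingBelow le_rfl
  have hvf : sympForm (M *ᵥ e) (M *ᵥ f) = 1 := by rw [hM.sympForm_mulVec_s17]; simp [e, f]
  have hv := hM.mulVec_mem_vanishingBelow_s17 hfix he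
  generalize hv_def : M *ᵥ e = v at hvf hv
  obtain ⟨z, hz, hzκ, s, hs⟩ := exists_isUnit_add_sympForm hR hv hvf
  obtain ⟨h₁, hM₁, hfix₁⟩ := elqReduces_sympTransvection_mul hM hfix (add_mem hf hz)
    (sympTransvection_single_inl_mem_rootElems κ) (by simp [f, hzκ]) (-1)
  have hv₁ : (sympTransvection (f + z) (-1) *ᵥ v) (inr κ) = s := by
    rw [hs, sympTransvection_mulVec]
    simp only [map_add, LinearMap.add_apply, sympForm_single_inr_left, sympForm_swap z, f, hzκ,
      Pi.add_apply, Pi.smul_apply, Pi.single_eq_same, smul_eq_mul]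
    ring
  set v₁ := sympTransvection (f + z) (-1) *ᵥ v
  have hmove : sympTransvection (e - v₁) ↑s⁻¹ *ᵥ v₁ = e :=
    sympTransvection_sub_mulVec (by rw [sympForm_single_inl_left, hv₁, Units.inv_mul])
  have hv₁_def : (sympTransvection (f + z) (-1) * M) *ᵥ e = v₁ := by
    rw [← mulVec_mulVec, hv_def]
  obtain ⟨h₂, hM₂, hfix₂⟩ := elqReduces_sympTransvection_mul hM₁ hfix₁
    (sub_mem he (hv₁_def ▸ hM₁.mulVec_mem_vanishingBelow_s17 hfix₁ he))
    (sympTransvection_single_inl_mem_rootElems κ)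
    (by rw [map_sub, LinearMap.sub_apply, sympForm_self, sympForm_single_inl_right, hv₁, zero_sub,
      neg_neg]; exact s.isUnit) ↑s⁻¹
  exact ⟨_, h₁.trans h₂, hM₂, hfix₂, by rw [← mulVec_mulVec, hv₁_def, hmove]⟩

lemma exists_elqReduces_fixesPairsBelow_succ_of_mulVec_single_inl_eq {κ : Fin n}
    {M : Mat n R} (hM : IsSymp M) (hfix : FixesPairsBelow κ M)
    (hMe : M *ᵥ Pi.single (inl κ) 1 = Pi.single (inl κ) 1) :
    ∃ N, ELQReduces 2 M N ∧ IsSymp N ∧ FixesPairsBelow (κ + 1) N := by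
  set e : Vec n R := Pi.single (inl κ) 1
  set f : Vec n R := Pi.single (inr κ) 1
  have he : e ∈ vanishingBelow κ := single_inl_mem_vanishingBelow le_rfl
  have hf : f ∈ vanishingBelow κ := single_inr_mem_vanishingBelow le_rfl
  have hu₁ : (M *ᵥ f) (inr κ) = 1 := by
    have h : sympForm e (M *ᵥ f) = 1 := by rw [← hMe, hM.sympForm_mulVec_s17]; simp [e, f]
    rwa [sympForm_single_inl_left] at h
  have hu := hM.mulVec_mem_vanishingBelow_s17 hfix hf
  generalize hu_def : M *ᵥ f = u at hu₁ hu
  -- chosen so that `ω(x, u) = -1`, `ω(x - u, e) = 0` and `ω(x - u, f) = -1`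
  set x : Vec n R := (u (inl κ) - 1) • e + f
  have hx : x (inr κ) = 1 := by simp [x, e, f]
  have hmove₃ : sympTransvection (x - u) (-1) *ᵥ u = x :=
    sympTransvection_sub_mulVec (by simp [x, hu₁, e, f])
  have hfix₃ : sympForm (x - u) e = 0 := by
    rw [map_sub, LinearMap.sub_apply, sympForm_single_inl_right, sympForm_single_inl_right, hx,
      hu₁, sub_self]
  obtain ⟨h₃, hM₃, hfix₃'⟩ := elqReduces_sympTransvection_mul (w := x - u) hM hfix
    (sub_mem (add_mem (Submodule.smul_mem _ _ he) hf) hu)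
    (sympTransvection_single_inr_mem_rootElems κ) (by simp [x, e, f]) (-1)
  have hmove₄ : sympTransvection e (1 - u (inl κ)) *ᵥ x = f := by
    rw [sympTransvection_mulVec, sympForm_single_inl_left, hx]
    ext p
    simp only [x, Pi.add_apply, Pi.smul_apply, smul_eq_mul]
    ring
  obtain ⟨h₄, hM₄, hfix₄⟩ := elqReduces_sympTransvection_mul hM₃ hfix₃' he
    (sympTransvection_single_inr_mem_rootElems κ) (by simp [e]) (1 - u (inl κ))
  refine ⟨_, h₃.trans h₄, hM₄, hfix₄.succ ?_ ?_⟩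
  · rw [← mulVec_mulVec, ← mulVec_mulVec, hMe,
      sympTransvection_mulVec_of_sympForm_eq_zero hfix₃,
      sympTransvection_mulVec_of_sympForm_eq_zero (sympForm_self e)]
  · rw [← mulVec_mulVec, ← mulVec_mulVec, hu_def, hmove₃, hmove₄]

lemma exists_elqReduces_fixesPairsBelow_succ (hR : HasStableRangeOne R) {κ : Fin n}
    {M : Mat n R} (hM : IsSymp M) (hfix : FixesPairsBelow κ M) :
    ∃ N, ELQReduces 4 M N ∧ IsSymp N ∧ FixesPairsBelow (κ + 1) N := by
  obtain ⟨N₁, h₁, hN₁, hfix₁, hN₁e⟩ :=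
    exists_elqReduces_mulVec_single_inl_eq hR hM hfix
  obtain ⟨N, h₂, hN, hfixN⟩ :=
    exists_elqReduces_fixesPairsBelow_succ_of_mulVec_single_inl_eq hN₁ hfix₁ hN₁e
  exact ⟨N, h₁.trans h₂, hN, hfixN⟩

lemma elqReduces_one_of_fixesPairsBelow (hR : HasStableRangeOne R) :
    ∀ m k : ℕ, k + m = n → ∀ {M : Mat n R}, IsSymp M → FixesPairsBelow k M →
      ELQReduces (4 * m) M 1
  | 0, k, hk, M, _, hfix => by
    subst hk
    simpa [hfix.eq_one] using ELQReduces.refl (1 : Mat (k + 0) R)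
  | m + 1, k, hk, M, hM, hfix => by
    obtain ⟨N, hMN, hN, hfixN⟩ :=
      exists_elqReduces_fixesPairsBelow_succ hR (κ := ⟨k, by omega⟩) hM hfix
    rw [Nat.mul_succ, add_comm]
    exact hMN.trans (elqReduces_one_of_fixesPairsBelow hR m (k + 1) (by omega) hN hfixN)

lemma _root_.IsSymp.elqReduces_one (hR : HasStableRangeOne R) {M : Mat n R} (hM : IsSymp M) :
    ELQReduces (4 * n) M 1 :=
  elqReduces_one_of_fixesPairsBelow hR n 0 (zero_add n) hM fun _ hj => absurd hj (Nat.not_lt_zero _)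

end SymplecticWidth

theorem stmt17_general {R : Type*} [CommRing R]
    {n : ℕ} (hn : 2 ≤ n)
    (hSR1 : ∀ v₀ v₁ : R, Ideal.span {v₀, v₁} = ⊤ → ∃ t : R, IsUnit (v₁ + t * v₀)) :
    ∀ M : Matrix (Fin n ⊕ Fin n) (Fin n ⊕ Fin n) R, IsSymp M →
      ∃ L : List (Matrix (Fin n ⊕ Fin n) (Fin n ⊕ Fin n) R),
        (∀ x ∈ L, x ∈ ELQ n R) ∧ L.length ≤ 9 * n - 6 ∧ M = L.prod := by
  intro M hM
  obtain ⟨L, hL, hlen, hM_eq⟩ := hM.elqReduces_one hSR1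
  exact ⟨L, hL, by omega, by rw [hM_eq, Matrix.mul_one]⟩

/-- If `R` is a PID of stable range `1` with `Sp_{2n}(R) = E(C_n,R)`, then every element
of `Sp_{2n}(R)` is a product of at most `9n − 6` conjugates of root elements. -/
theorem stmt17 {R : Type*} [CommRing R] [IsDomain R] [IsPrincipalIdealRing R]
    {n : ℕ} (hn : 2 ≤ n)
    (hSR1 : ∀ v₀ v₁ : R, Ideal.span {v₀, v₁} = ⊤ → ∃ t : R, IsUnit (v₁ + t * v₀))
    (hgen : ∀ M : Matrix (Fin n ⊕ Fin n) (Fin n ⊕ Fin n) R, IsSymp M →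
      M ∈ Submonoid.closure (RootElems n R)) :
    ∀ M : Matrix (Fin n ⊕ Fin n) (Fin n ⊕ Fin n) R, IsSymp M →
      ∃ L : List (Matrix (Fin n ⊕ Fin n) (Fin n ⊕ Fin n) R),
        (∀ x ∈ L, x ∈ ELQ n R) ∧ L.length ≤ 9 * n - 6 ∧ M = L.prod :=
  stmt17_general hn hSR1
end
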